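/- arXiv:1210.5575 — 3 statements merged into one kernel-verified Lean document; each statement's English description precedes it below -/
import Mathlib

section
/- For every integer p ≥ 1, the collection of all interior functions for the H(div)-conforming hexahedral element of order p — namely ψ^{H1^1}_{i,j,k}, ψ^{H1^2}_{i,j,k} for 0 ≤ i,j,k ≤ p−1, ψ^{H1^3}_{j,k}, ψ^{H1^4}_{i,k}, ψ^{H1^5}_{i,j} for indices between 0 and p−1, ψ^{H2^1}_{i,j,k} for 0 ≤ i,j,k ≤ p−1, ψ^{H2^2}_{j,k}, ψ^{H2^3}_{i,k}, ψ^{H2^4}_{i,j} for indices between 0 and p−1, and ψ^{H3^1}_i, ψ^{H3^2}_j, ψ^{H3^3}_k for indices between 0 and p−1 — is linearly independent over ℝ as functions from [0,1]³ to ℝ³. -/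
open MeasureTheory
open scoped BigOperators

noncomputable section

/-- The reference cube `H = [0,1]³` (`p 0 = ξ`, `p 1 = η`, `p 2 = ζ`). -/
def HCube : Set (Fin 3 → ℝ) :=
  {p | (0 ≤ p 0 ∧ p 0 ≤ 1) ∧ (0 ≤ p 1 ∧ p 1 ≤ 1) ∧ (0 ≤ p 2 ∧ p 2 ≤ 1)}

/-- The classical Jacobi polynomial `P_n^{(a,b)}` in homogenized form:
`jacobiHom n a b u w = w^n P_n^{(a,b)}(u/w)` (for `w ≠ 0`). -/
def jacobiHom (n a b : ℕ) (u w : ℝ) : ℝ :=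
  ∑ k ∈ Finset.range (n+1),
    (((n+a).choose (n-k) : ℝ)) * (((n+b).choose k : ℝ)) *
      ((u - w)/2)^k * ((u + w)/2)^(n-k)

/-- The degree-`n` Legendre polynomial `ℓ_n` (normalized so `ℓ_n(1) = 1`). -/
def legendre (n : ℕ) (x : ℝ) : ℝ := jacobiHom n 0 0 x 1

/-- The integrated Legendre polynomial `L_n(x) = ∫_{−1}^x ℓ_{n−1}(t) dt`. -/
def intLeg (n : ℕ) (x : ℝ) : ℝ := ∫ t in (-1:ℝ)..x, legendre (n-1) t

/-- Type 1 interior function `ψ^{H1^1}_{i,j,k}`. -/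
def psiH11 (i j k : ℕ) (p : Fin 3 → ℝ) : Fin 3 → ℝ :=
  ![4 * intLeg (i+2) (2*p 0-1) * legendre (j+1) (2*p 1-1) * legendre (k+1) (2*p 2-1),
    0,
    -(4 * legendre (i+1) (2*p 0-1) * legendre (j+1) (2*p 1-1) * intLeg (k+2) (2*p 2-1))]

/-- Type 1 interior function `ψ^{H1^2}_{i,j,k}`. -/
def psiH12 (i j k : ℕ) (p : Fin 3 → ℝ) : Fin 3 → ℝ :=
  ![0,
    4 * legendre (i+1) (2*p 0-1) * intLeg (j+2) (2*p 1-1) * legendre (k+1) (2*p 2-1),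
    -(4 * legendre (i+1) (2*p 0-1) * legendre (j+1) (2*p 1-1) * intLeg (k+2) (2*p 2-1))]

/-- Type 1 interior function `ψ^{H1^3}_{j,k}`. -/
def psiH13 (j k : ℕ) (p : Fin 3 → ℝ) : Fin 3 → ℝ :=
  ![0,
    -(2 * intLeg (j+2) (2*p 1-1) * legendre (k+1) (2*p 2-1)),
    2 * legendre (j+1) (2*p 1-1) * intLeg (k+2) (2*p 2-1)]

/-- Type 1 interior function `ψ^{H1^4}_{i,k}`. -/
def psiH14 (i k : ℕ) (p : Fin 3 → ℝ) : Fin 3 → ℝ :=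
  ![2 * intLeg (i+2) (2*p 0-1) * legendre (k+1) (2*p 2-1),
    0,
    -(2 * legendre (i+1) (2*p 0-1) * intLeg (k+2) (2*p 2-1))]

/-- Type 1 interior function `ψ^{H1^5}_{i,j}`. -/
def psiH15 (i j : ℕ) (p : Fin 3 → ℝ) : Fin 3 → ℝ :=
  ![2 * intLeg (i+2) (2*p 0-1) * legendre (j+1) (2*p 1-1),
    -(2 * legendre (i+1) (2*p 0-1) * intLeg (j+2) (2*p 1-1)),
    0]

/-- Type 2 interior function `ψ^{H2^1}_{i,j,k}`. -/
def psiH21 (i j k : ℕ) (p : Fin 3 → ℝ) : Fin 3 → ℝ :=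
  ![intLeg (i+2) (2*p 0-1) * legendre (j+1) (2*p 1-1) * legendre (k+1) (2*p 2-1),
    legendre (i+1) (2*p 0-1) * intLeg (j+2) (2*p 1-1) * legendre (k+1) (2*p 2-1),
    0]

/-- Type 2 interior function `ψ^{H2^2}_{j,k}`. -/
def psiH22 (j k : ℕ) (p : Fin 3 → ℝ) : Fin 3 → ℝ :=
  ![0,
    intLeg (j+2) (2*p 1-1) * legendre (k+1) (2*p 2-1),
    legendre (j+1) (2*p 1-1) * intLeg (k+2) (2*p 2-1)]

/-- Type 2 interior function `ψ^{H2^3}_{i,k}`. -/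
def psiH23 (i k : ℕ) (p : Fin 3 → ℝ) : Fin 3 → ℝ :=
  ![intLeg (i+2) (2*p 0-1) * legendre (k+1) (2*p 2-1),
    0,
    legendre (i+1) (2*p 0-1) * intLeg (k+2) (2*p 2-1)]

/-- Type 2 interior function `ψ^{H2^4}_{i,j}`. -/
def psiH24 (i j : ℕ) (p : Fin 3 → ℝ) : Fin 3 → ℝ :=
  ![intLeg (i+2) (2*p 0-1) * legendre (j+1) (2*p 1-1),
    legendre (i+1) (2*p 0-1) * intLeg (j+2) (2*p 1-1),
    0]

/-- Type 3 interior function `ψ^{H3^1}_i`. -/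
def psiH31 (i : ℕ) (p : Fin 3 → ℝ) : Fin 3 → ℝ := ![intLeg (i+2) (2*p 0-1), 0, 0]

/-- Type 3 interior function `ψ^{H3^2}_j`. -/
def psiH32 (j : ℕ) (p : Fin 3 → ℝ) : Fin 3 → ℝ := ![0, intLeg (j+2) (2*p 1-1), 0]

/-- Type 3 interior function `ψ^{H3^3}_k`. -/
def psiH33 (k : ℕ) (p : Fin 3 → ℝ) : Fin 3 → ℝ := ![0, 0, intLeg (k+2) (2*p 2-1)]

/-- Index type for the interior functions of the order-`p`
`H(div)`-conforming hexahedral element. -/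
inductive HexIdx (p : ℕ) where
  | h11 (i j k : Fin p)
  | h12 (i j k : Fin p)
  | h13 (j k : Fin p)
  | h14 (i k : Fin p)
  | h15 (i j : Fin p)
  | h21 (i j k : Fin p)
  | h22 (j k : Fin p)
  | h23 (i k : Fin p)
  | h24 (i j : Fin p)
  | h31 (i : Fin p)
  | h32 (j : Fin p)
  | h33 (k : Fin p)

/-- The family of all interior functions of order `p`, as functions from
`[0,1]³` to `ℝ³`. -/
def hexFam (p : ℕ) : HexIdx p → (HCube → Fin 3 → ℝ)
  | .h11 i j k => fun q => psiH11 i j k q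
  | .h12 i j k => fun q => psiH12 i j k q
  | .h13 j k => fun q => psiH13 j k q
  | .h14 i k => fun q => psiH14 i k q
  | .h15 i j => fun q => psiH15 i j q
  | .h21 i j k => fun q => psiH21 i j k q
  | .h22 j k => fun q => psiH22 j k q
  | .h23 i k => fun q => psiH23 i k q
  | .h24 i j => fun q => psiH24 i j q
  | .h31 i => fun q => psiH31 i q
  | .h32 j => fun q => psiH32 j q
  | .h33 k => fun q => psiH33 k q

/-!
Each Cartesian component of a combination `∑ g • ψ` is a combination of the tensor products
`L_{i+2}(ξ₁) ℓ_a(η₂) ℓ_b(ζ₃)` (up to a permutation of the variables), the lower-dimensional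
families entering through `ℓ₀ = 1`. These products are linearly independent on the cube because
`ℓ_n` has degree `n` and `L_{n+1}' = ℓ_n`, so all their coefficients vanish. The coefficients are
small linear combinations of the `g`'s, and the resulting systems (for the triple-indexed
functions, `4 g₁₁ + g₂₁ = 4 g₁₂ + g₂₁ = g₁₁ + g₁₂ = 0`) force every `g` to vanish.
-/

open Polynomial

lemma legendre_zero (x : ℝ) : legendre 0 x = 1 := by
  simp [legendre, jacobiHom]

def legendrePoly (n : ℕ) : ℝ[X] :=
  ∑ k ∈ Finset.range (n + 1),
    C ((n.choose (n - k) * n.choose k : ℝ) / 2 ^ n) * ((X - C 1) ^ k * (X + C 1) ^ (n - k))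

lemma eval_legendrePoly (n : ℕ) (x : ℝ) : (legendrePoly n).eval x = legendre n x := by
  simp only [legendrePoly, legendre, jacobiHom, eval_finsetSum, eval_mul, eval_C, eval_pow,
    eval_sub, eval_add, eval_X, Nat.add_zero]
  refine Finset.sum_congr rfl fun k hk => ?_
  have hkn : (2 : ℝ) ^ n = 2 ^ k * 2 ^ (n - k) := by
    rw [← pow_add, Nat.add_sub_cancel' (Nat.lt_succ_iff.mp (Finset.mem_range.mp hk))]
  rw [div_pow, div_pow, hkn]
  ring

lemma degree_legendrePoly (n : ℕ) : (legendrePoly n).degree = n := by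
  have hterm : ∀ k ≤ n, ((X - C 1 : ℝ[X]) ^ k * (X + C 1) ^ (n - k)).Monic ∧
      ((X - C 1 : ℝ[X]) ^ k * (X + C 1) ^ (n - k)).natDegree = n := by
    intro k hk
    have h1 := (monic_X_sub_C (1 : ℝ)).pow k
    have h2 := (monic_X_add_C (1 : ℝ)).pow (n - k)
    refine ⟨h1.mul h2, ?_⟩
    rw [h1.natDegree_mul h2, natDegree_pow, natDegree_pow, natDegree_X_sub_C, natDegree_X_add_C]
    omega
  have hcoeff : 0 < (legendrePoly n).coeff n := by
    rw [legendrePoly, finsetSum_coeff]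
    refine Finset.sum_pos (fun k hk => ?_) Finset.nonempty_range_add_one
    obtain ⟨hmonic, hdeg⟩ := hterm k (Nat.lt_succ_iff.mp (Finset.mem_range.mp hk))
    have hlead := hmonic.coeff_natDegree
    rw [hdeg] at hlead
    rw [coeff_C_mul, hlead, mul_one]
    have := Nat.choose_pos (Nat.sub_le n k)
    have := Nat.choose_pos (Nat.lt_succ_iff.mp (Finset.mem_range.mp hk))
    positivity
  refine degree_eq_of_le_of_coeff_ne_zero ?_ hcoeff.ne'
  refine (degree_le_natDegree).trans (Nat.cast_le.mpr ?_)
  refine natDegree_sum_le_of_forall_le _ _ fun k hk => (natDegree_C_mul_le _ _).trans ?_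
  exact (hterm k (Nat.lt_succ_iff.mp (Finset.mem_range.mp hk))).2.le

lemma linearIndependent_legendrePoly : LinearIndependent ℝ legendrePoly :=
  (⟨legendrePoly, degree_legendrePoly⟩ : Polynomial.Sequence ℝ).linearIndependent

def polyAntideriv {K : Type*} [Field K] (P : K[X]) : K[X] :=
  ∑ n ∈ Finset.range (P.natDegree + 1), C (P.coeff n / (n + 1)) * X ^ (n + 1)

lemma derivative_polyAntideriv {K : Type*} [Field K] [CharZero K] (P : K[X]) :
    derivative (polyAntideriv P) = P := by
  conv_rhs => rw [as_sum_range_C_mul_X_pow P]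
  simp only [polyAntideriv, derivative_sum, derivative_C_mul_X_pow, Nat.cast_add, Nat.cast_one,
    add_tsub_cancel_right]
  refine Finset.sum_congr rfl fun n _ => ?_
  rw [div_mul_cancel₀ _ (Nat.cast_add_one_ne_zero n)]

def intLegendrePoly (n : ℕ) : ℝ[X] :=
  polyAntideriv (legendrePoly n) - C ((polyAntideriv (legendrePoly n)).eval (-1))

lemma derivative_intLegendrePoly (n : ℕ) : derivative (intLegendrePoly n) = legendrePoly n := by
  rw [intLegendrePoly, derivative_sub, derivative_C, sub_zero, derivative_polyAntideriv]

lemma eval_intLegendrePoly (n : ℕ) (x : ℝ) : (intLegendrePoly n).eval x = intLeg (n + 1) x := by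
  have hderiv : ∀ t, HasDerivAt (fun t => (intLegendrePoly n).eval t) (legendre n t) t := by
    intro t
    simpa [derivative_intLegendrePoly, eval_legendrePoly] using (intLegendrePoly n).hasDerivAt t
  have hcont : Continuous (legendre n) := by
    simpa [funext (eval_legendrePoly n)] using (legendrePoly n).continuous
  rw [intLeg, Nat.add_sub_cancel, intervalIntegral.integral_eq_sub_of_hasDerivAt
    (fun t _ => hderiv t) (hcont.intervalIntegrable _ _)]
  simp [intLegendrePoly]

lemma LinearIndependent.eval_of_infinite {R ι : Type*} [CommRing R] [IsDomain R] {P : ι → R[X]}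
    (hP : LinearIndependent R P) {s : Set R} (hs : s.Infinite) :
    LinearIndependent R (fun i (x : s) => (P i).eval ↑x) := by
  refine hP.map' (LinearMap.pi fun x : s => leval (x : R)) (LinearMap.ker_eq_bot.mpr ?_)
  refine (injective_iff_map_eq_zero _).mpr fun Q hQ => eq_zero_of_infinite_isRoot Q ?_
  refine hs.mono fun x hx => ?_
  simpa using congrFun hQ ⟨x, hx⟩

lemma linearIndependent_legendre_Icc {ι : Type*} {d : ι → ℕ} (hd : Function.Injective d) :
    LinearIndependent ℝ (fun i (x : Set.Icc (-1 : ℝ) 1) => legendre (d i) x) := by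
  simpa [eval_legendrePoly] using
    (linearIndependent_legendrePoly.comp d hd).eval_of_infinite
      (Set.Icc_infinite (by norm_num : (-1 : ℝ) < 1))

lemma linearIndependent_intLeg_Icc {ι : Type*} {d : ι → ℕ} (hd : Function.Injective d) :
    LinearIndependent ℝ (fun i (x : Set.Icc (-1 : ℝ) 1) => intLeg (d i + 1) x) := by
  have hderiv : LinearIndependent ℝ (derivative ∘ fun i => intLegendrePoly (d i)) := by
    simpa [Function.comp_def, derivative_intLegendrePoly] using
      linearIndependent_legendrePoly.comp d hd
  simpa [eval_intLegendrePoly] using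
    (hderiv.of_comp _).eval_of_infinite (Set.Icc_infinite (by norm_num : (-1 : ℝ) < 1))

lemma LinearIndependent.mul_prod {R ι κ X Y : Type*} [CommRing R] [Fintype ι] [Fintype κ]
    {f : ι → X → R} {g : κ → Y → R} (hf : LinearIndependent R f) (hg : LinearIndependent R g) :
    LinearIndependent R (fun t : ι × κ => fun z : X × Y => f t.1 z.1 * g t.2 z.2) := by
  rw [Fintype.linearIndependent_iff] at hf hg ⊢
  intro c hc ⟨i, j⟩
  have hslice : ∀ i y, ∑ j, c (i, j) * g j y = 0 := by
    intro i y
    refine hf (fun i => ∑ j, c (i, j) * g j y) (funext fun x => ?_) i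
    have hxy := congrFun hc (x, y)
    simp only [Finset.sum_apply, Pi.smul_apply, smul_eq_mul, Fintype.sum_prod_type,
      Pi.zero_apply] at hxy ⊢
    rw [← hxy]
    simp only [Finset.sum_mul]
    exact Finset.sum_congr rfl fun i _ => Finset.sum_congr rfl fun j _ => by ring
  exact hg (fun j => c (i, j)) (funext fun y => by simpa using hslice i y) j

def cubeFam {ι κ μ : Type*} (f : ι → ℝ → ℝ) (g : κ → ℝ → ℝ) (h : μ → ℝ → ℝ)
    (t : ι × κ × μ) (q : HCube) : ℝ :=
  f t.1 (2 * q.1 0 - 1) * (g t.2.1 (2 * q.1 1 - 1) * h t.2.2 (2 * q.1 2 - 1))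

lemma linearIndependent_cubeFam {ι κ μ : Type*} [Fintype ι] [Fintype κ] [Fintype μ]
    {f : ι → ℝ → ℝ} {g : κ → ℝ → ℝ} {h : μ → ℝ → ℝ}
    (hf : LinearIndependent ℝ fun i (x : Set.Icc (-1 : ℝ) 1) => f i x)
    (hg : LinearIndependent ℝ fun j (y : Set.Icc (-1 : ℝ) 1) => g j y)
    (hh : LinearIndependent ℝ fun k (z : Set.Icc (-1 : ℝ) 1) => h k z) :
    LinearIndependent ℝ (cubeFam f g h) := by
  have hIcc {t : ℝ} (ht : 0 ≤ t ∧ t ≤ 1) : 2 * t - 1 ∈ Set.Icc (-1 : ℝ) 1 :=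
    ⟨by linarith [ht.1], by linarith [ht.2]⟩
  let toIcc : HCube → Set.Icc (-1 : ℝ) 1 × Set.Icc (-1 : ℝ) 1 × Set.Icc (-1 : ℝ) 1 :=
    fun q => (⟨_, hIcc q.2.1⟩, ⟨_, hIcc q.2.2.1⟩, ⟨_, hIcc q.2.2.2⟩)
  have hsurj : Function.Surjective toIcc := by
    rintro ⟨⟨x, hx⟩, ⟨y, hy⟩, ⟨z, hz⟩⟩
    refine ⟨⟨![(x + 1) / 2, (y + 1) / 2, (z + 1) / 2], ?_⟩, ?_⟩
    · refine ⟨⟨?_, ?_⟩, ⟨?_, ?_⟩, ⟨?_, ?_⟩⟩ <;> simp <;> linarith [hx.1, hx.2, hy.1, hy.2, hz.1, hz.2]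
    · refine Prod.ext (Subtype.ext ?_) (Prod.ext (Subtype.ext ?_) (Subtype.ext ?_)) <;>
        simp [toIcc] <;> ring
  exact (hf.mul_prod (hg.mul_prod hh)).map' (LinearMap.funLeft ℝ ℝ toIcc)
    (LinearMap.ker_eq_bot.mpr (LinearMap.funLeft_injective_of_surjective _ _ _ hsurj))

section HexIdx

variable {p : ℕ}

def hexIdxEquiv (p : ℕ) :
    (Fin p × Fin p × Fin p ⊕ Fin p × Fin p × Fin p ⊕ Fin p × Fin p ⊕ Fin p × Fin p ⊕
      Fin p × Fin p ⊕ Fin p × Fin p × Fin p ⊕ Fin p × Fin p ⊕ Fin p × Fin p ⊕ Fin p × Fin p ⊕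
      Fin p ⊕ Fin p ⊕ Fin p) ≃ HexIdx p where
  toFun := Sum.elim (fun v => .h11 v.1 v.2.1 v.2.2) <| Sum.elim (fun v => .h12 v.1 v.2.1 v.2.2) <|
    Sum.elim (fun v => .h13 v.1 v.2) <| Sum.elim (fun v => .h14 v.1 v.2) <|
    Sum.elim (fun v => .h15 v.1 v.2) <| Sum.elim (fun v => .h21 v.1 v.2.1 v.2.2) <|
    Sum.elim (fun v => .h22 v.1 v.2) <| Sum.elim (fun v => .h23 v.1 v.2) <|
    Sum.elim (fun v => .h24 v.1 v.2) <| Sum.elim .h31 <| Sum.elim .h32 .h33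
  invFun
    | .h11 i j k => .inl (i, j, k)
    | .h12 i j k => .inr <| .inl (i, j, k)
    | .h13 j k => .inr <| .inr <| .inl (j, k)
    | .h14 i k => .inr <| .inr <| .inr <| .inl (i, k)
    | .h15 i j => .inr <| .inr <| .inr <| .inr <| .inl (i, j)
    | .h21 i j k => .inr <| .inr <| .inr <| .inr <| .inr <| .inl (i, j, k)
    | .h22 j k => .inr <| .inr <| .inr <| .inr <| .inr <| .inr <| .inl (j, k)
    | .h23 i k => .inr <| .inr <| .inr <| .inr <| .inr <| .inr <| .inr <| .inl (i, k)
    | .h24 i j => .inr <| .inr <| .inr <| .inr <| .inr <| .inr <| .inr <| .inr <| .inl (i, j)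
    | .h31 i => .inr <| .inr <| .inr <| .inr <| .inr <| .inr <| .inr <| .inr <| .inr <| .inl i
    | .h32 j => .inr <| .inr <| .inr <| .inr <| .inr <| .inr <| .inr <| .inr <| .inr <| .inr <|
        .inl j
    | .h33 k => .inr <| .inr <| .inr <| .inr <| .inr <| .inr <| .inr <| .inr <| .inr <| .inr <|
        .inr k
  left_inv := by
    rintro (⟨_, _, _⟩ | ⟨_, _, _⟩ | ⟨_, _⟩ | ⟨_, _⟩ | ⟨_, _⟩ | ⟨_, _, _⟩ | ⟨_, _⟩ | ⟨_, _⟩ |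
      ⟨_, _⟩ | _ | _ | _) <;> rfl
  right_inv := by rintro (_ | _ | _ | _ | _ | _ | _ | _ | _ | _ | _ | _) <;> rfl

instance : Fintype (HexIdx p) := Fintype.ofEquiv _ (hexIdxEquiv p)

def intLegFam (p : ℕ) (i : Fin p) : ℝ → ℝ := intLeg (i + 2)

def legFam (p : ℕ) (a : Option (Fin p)) : ℝ → ℝ := legendre (a.elim 0 fun j => j + 1)

lemma linearIndependent_intLegFam : LinearIndependent ℝ fun i (x : Set.Icc (-1 : ℝ) 1) =>
    intLegFam p i x :=
  linearIndependent_intLeg_Icc (d := fun i : Fin p => i + 1) fun i j h => Fin.ext (by simpa using h)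

lemma linearIndependent_legFam : LinearIndependent ℝ fun a (x : Set.Icc (-1 : ℝ) 1) =>
    legFam p a x :=
  linearIndependent_legendre_Icc fun a b h => by
    cases a <;> cases b <;> simp_all [Fin.ext_iff]

/-- `coeffX g (i, a, b)` is the coefficient of `L_{i+2}(ξ₁) ℓ_a(η₂) ℓ_b(ζ₃)` (with `ℓ_none = ℓ₀`)
in the first component of `∑ g • ψ`; `coeffY`, `coeffZ` likewise for the other components. -/
def coeffX (g : HexIdx p → ℝ) : Fin p × Option (Fin p) × Option (Fin p) → ℝ
  | (i, none, none) => g (.h31 i)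
  | (i, none, some k) => 2 * g (.h14 i k) + g (.h23 i k)
  | (i, some j, none) => 2 * g (.h15 i j) + g (.h24 i j)
  | (i, some j, some k) => 4 * g (.h11 i j k) + g (.h21 i j k)

def coeffY (g : HexIdx p → ℝ) : Option (Fin p) × Fin p × Option (Fin p) → ℝ
  | (none, j, none) => g (.h32 j)
  | (none, j, some k) => -2 * g (.h13 j k) + g (.h22 j k)
  | (some i, j, none) => -2 * g (.h15 i j) + g (.h24 i j)
  | (some i, j, some k) => 4 * g (.h12 i j k) + g (.h21 i j k)

def coeffZ (g : HexIdx p → ℝ) : Option (Fin p) × Option (Fin p) × Fin p → ℝ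
  | (none, none, k) => g (.h33 k)
  | (none, some j, k) => 2 * g (.h13 j k) + g (.h22 j k)
  | (some i, none, k) => -2 * g (.h14 i k) + g (.h23 i k)
  | (some i, some j, k) => -4 * g (.h11 i j k) - 4 * g (.h12 i j k)

lemma sum_smul_hexFam_apply_zero (g : HexIdx p → ℝ) (q : HCube) :
    (∑ idx, g idx • hexFam p idx) q 0 =
      ∑ t, coeffX g t * cubeFam (intLegFam p) (legFam p) (legFam p) t q := by
  rw [← (hexIdxEquiv p).sum_comp]
  simp only [hexIdxEquiv, Equiv.coe_fn_mk, hexFam, psiH11, Fin.isValue, psiH12, psiH13, psiH14,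
    psiH15, psiH21, psiH22, psiH23, psiH24, psiH31, psiH32, psiH33, Finset.sum_apply, Pi.smul_apply,
    smul_eq_mul, Fintype.sum_sum_type, Sum.elim_inl, Matrix.cons_val_zero, Fintype.sum_prod_type,
    Sum.elim_inr, mul_zero, Finset.sum_const_zero, add_zero, zero_add, coeffX, cubeFam, intLegFam,
    legFam, Fintype.sum_option, Option.elim_none, legendre_zero, mul_one, Option.elim_some,
    Finset.sum_add_distrib, add_mul, one_mul]
  ring_nf

lemma sum_smul_hexFam_apply_one (g : HexIdx p → ℝ) (q : HCube) :
    (∑ idx, g idx • hexFam p idx) q 1 =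
      ∑ t, coeffY g t * cubeFam (legFam p) (intLegFam p) (legFam p) t q := by
  rw [← (hexIdxEquiv p).sum_comp]
  simp only [hexIdxEquiv, Equiv.coe_fn_mk, hexFam, psiH11, Fin.isValue, psiH12, psiH13, psiH14,
    psiH15, psiH21, psiH22, psiH23, psiH24, psiH31, psiH32, psiH33, Finset.sum_apply, Pi.smul_apply,
    smul_eq_mul, Fintype.sum_sum_type, Sum.elim_inl, Matrix.cons_val_one, Matrix.cons_val_zero,
    mul_zero, Finset.sum_const_zero, Sum.elim_inr, Fintype.sum_prod_type, mul_neg,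
    Finset.sum_neg_distrib, add_zero, zero_add, coeffY, neg_mul, cubeFam, legFam, intLegFam,
    Fintype.sum_option, Option.elim_none, legendre_zero, mul_one, Option.elim_some,
    Finset.sum_add_distrib, one_mul, add_mul]
  ring_nf

lemma sum_smul_hexFam_apply_two (g : HexIdx p → ℝ) (q : HCube) :
    (∑ idx, g idx • hexFam p idx) q 2 =
      ∑ t, coeffZ g t * cubeFam (legFam p) (legFam p) (intLegFam p) t q := by
  rw [← (hexIdxEquiv p).sum_comp]
  simp only [hexIdxEquiv, Equiv.coe_fn_mk, hexFam, psiH11, Fin.isValue, psiH12, psiH13, psiH14,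
    psiH15, psiH21, psiH22, psiH23, psiH24, psiH31, psiH32, psiH33, Finset.sum_apply, Pi.smul_apply,
    smul_eq_mul, Fintype.sum_sum_type, Sum.elim_inl, Matrix.cons_val, mul_neg,
    Finset.sum_neg_distrib, Fintype.sum_prod_type, Sum.elim_inr, mul_zero, Finset.sum_const_zero,
    zero_add, coeffZ, neg_mul, cubeFam, legFam, intLegFam, Fintype.sum_option, Option.elim_none,
    legendre_zero, one_mul, Option.elim_some, Finset.sum_add_distrib, add_mul, sub_mul,
    Finset.sum_sub_distrib]
  ring_nf

lemma eq_zero_of_coeff_eq_zero {g : HexIdx p → ℝ} (hX : ∀ t, coeffX g t = 0)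
    (hY : ∀ t, coeffY g t = 0) (hZ : ∀ t, coeffZ g t = 0) (idx : HexIdx p) : g idx = 0 := by
  cases idx with
  | h11 i j k | h12 i j k | h21 i j k =>
    have hx := hX (i, some j, some k)
    have hy := hY (some i, j, some k)
    have hz := hZ (some i, some j, k)
    simp only [coeffX, coeffY, coeffZ] at hx hy hz
    linarith
  | h13 j k | h22 j k =>
    have hy := hY (none, j, some k)
    have hz := hZ (none, some j, k)
    simp only [coeffY, coeffZ] at hy hz
    linarith
  | h14 i k | h23 i k =>
    have hx := hX (i, none, some k)
    have hz := hZ (some i, none, k)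
    simp only [coeffX, coeffZ] at hx hz
    linarith
  | h15 i j | h24 i j =>
    have hx := hX (i, some j, none)
    have hy := hY (some i, j, none)
    simp only [coeffX, coeffY] at hx hy
    linarith
  | h31 i => exact hX (i, none, none)
  | h32 j => exact hY (none, j, none)
  | h33 k => exact hZ (none, none, k)

end HexIdx

/-- for every `p ≥ 1` the collection of all interior functions for
the `H(div)`-conforming hexahedral element of order `p` is linearly independent
over `ℝ` as functions from `[0,1]³` to `ℝ³`. -/
theorem stmt3 : ∀ p : ℕ, 1 ≤ p → LinearIndependent ℝ (hexFam p) := by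
  intro p _
  rw [Fintype.linearIndependent_iff]
  intro g hg
  have hX := Fintype.linearIndependent_iff.mp
    (linearIndependent_cubeFam linearIndependent_intLegFam linearIndependent_legFam
      linearIndependent_legFam) (coeffX g) (funext fun q => by
        simpa [sum_smul_hexFam_apply_zero] using congrFun (congrFun hg q) 0)
  have hY := Fintype.linearIndependent_iff.mp
    (linearIndependent_cubeFam linearIndependent_legFam linearIndependent_intLegFam
      linearIndependent_legFam) (coeffY g) (funext fun q => by
        simpa [sum_smul_hexFam_apply_one] using congrFun (congrFun hg q) 1)
  have hZ := Fintype.linearIndependent_iff.mp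
    (linearIndependent_cubeFam linearIndependent_legFam linearIndependent_legFam
      linearIndependent_intLegFam) (coeffZ g) (funext fun q => by
        simpa [sum_smul_hexFam_apply_two] using congrFun (congrFun hg q) 2)
  exact eq_zero_of_coeff_eq_zero hX hY hZ
end
end

section
/- On the reference triangle K², for each edge e_k = [k1,k2] (0 ≤ k1 < k2 ≤ 2), the edge-based interior functions Φ^{t,i}_{e[k1,k2]} = C_i λ_{k1} λ_{k2} (1−λ_{k1})^i P_i^{(0,2)}(2λ_{k2}/(1−λ_{k1}) − 1) τ^{e_k}/|τ^{e_k}| with C_i = √(2(i+2)(i+3)(2i+3)(2i+5)) are orthonormal on K²: for all integers m, n ≥ 0, ⟨Φ^{t,m}_{e[k1,k2]}, Φ^{t,n}_{e[k1,k2]}⟩_{K²} = δ_{mn}. -/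
open MeasureTheory
open scoped BigOperators

noncomputable section

/-- Vertices of the reference triangle: `v0 = (0,0)`, `v1 = (1,0)`, `v2 = (0,1)`. -/
def vtx2 : Fin 3 → Fin 2 → ℝ := ![![0,0], ![1,0], ![0,1]]

/-- Barycentric coordinates `λ0 = 1−ξ−η`, `λ1 = ξ`, `λ2 = η`. -/
def lam2 : Fin 3 → (Fin 2 → ℝ) → ℝ :=
  ![fun p => 1 - p 0 - p 1, fun p => p 0, fun p => p 1]

/-- The (constant) gradients `∇λ_i`. -/
def gradLam2 : Fin 3 → Fin 2 → ℝ := ![![-1,-1], ![1,0], ![0,1]]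

/-- The reference triangle `K² = {(ξ,η) : ξ ≥ 0, η ≥ 0, ξ+η ≤ 1}`. -/
def K2 : Set (Fin 2 → ℝ) := {p | 0 ≤ p 0 ∧ 0 ≤ p 1 ∧ p 0 + p 1 ≤ 1}

/-- Euclidean dot product in ℝ². -/
def dot2 (u v : Fin 2 → ℝ) : ℝ := ∑ i, u i * v i

/-- Euclidean norm in ℝ². -/
def norm2 (u : Fin 2 → ℝ) : ℝ := Real.sqrt (∑ i, u i ^ 2)

/-- Normalization constant `C_i = √(2(i+2)(i+3)(2i+3)(2i+5))`. -/
def CEdgeTri (i : ℕ) : ℝ := Real.sqrt ((2*(i+2)*(i+3)*(2*i+3)*(2*i+5) : ℕ) : ℝ)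

/-- Edge-based interior function
`Φ^{t,i}_{e[k1,k2]} = C_i λ_{k1} λ_{k2} (1−λ_{k1})^i P_i^{(0,2)}(2λ_{k2}/(1−λ_{k1}) − 1) τ^{e_k}/|τ^{e_k}|`
(with the Jacobi factor in cleared-denominator form). -/
def PhiEdgeTri (k1 k2 : Fin 3) (i : ℕ) (p : Fin 2 → ℝ) : Fin 2 → ℝ :=
  (CEdgeTri i * lam2 k1 p * lam2 k2 p *
    jacobiHom i 0 2 (2 * lam2 k2 p - (1 - lam2 k1 p)) (1 - lam2 k1 p)) •
  ((norm2 (vtx2 k2 - vtx2 k1))⁻¹ • (vtx2 k2 - vtx2 k1))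

/-!
Put `u = λ_{k1}`, `v = λ_{k2}` and let `w` be the third barycentric coordinate. Since
`2λ_{k2} − (1 − λ_{k1}) ∓ (1 − λ_{k1})` equals `−2w` resp. `2v`, the homogenized Jacobi factor of
degree `n` is `∑_j c_{n,j} v^j w^{n−j}` with `c_{n,j} = (−1)^{n−j} C(n,j) C(n+2,n−j)`, so
`⟨Φ_m, Φ_n⟩` is a finite combination of Dirichlet integrals `∫ u² v^a w^b = 2 a! b!/(a+b+4)!`.
For `m ≤ n` and a fixed term `i` of the first factor, `C(n+2,n−j) (i+j+2)! (m−i+n−j)!` is `(n+2)!`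
times a polynomial of degree `m` in `j`; its `n`-th alternating binomial sum (an `n`-th forward
difference) vanishes for `m < n` and picks out the leading coefficient for `m = n`. Vandermonde's
identity then gives `‖Φ_n‖² = 2 C_n² (2n+2)!/(2n+6)! = 1`.
-/

open Finset Polynomial Nat

theorem Polynomial.sum_range_neg_one_pow_mul_choose_mul_eval {R : Type*} [CommRing R]
    {P : R[X]} {n : ℕ} (hP : P.natDegree ≤ n) :
    ∑ k ∈ range (n + 1), (-1 : R) ^ (n - k) * n.choose k * P.eval (k : R) = n ! * P.coeff n := by
  have h := fwdDiff_iter_eq_sum_shift (1 : R) P.eval n 0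
  simp only [zero_add, nsmul_eq_mul, mul_one, zsmul_eq_mul] at h
  push_cast at h
  rw [← h]
  rcases hP.lt_or_eq with hlt | rfl
  · rw [Polynomial.fwdDiff_iter_eq_zero_of_degree_lt hlt, coeff_eq_zero_of_natDegree_lt hlt]
    simp
  · rw [P.fwdDiff_iter_degree_eq_factorial, Pi.smul_apply, smul_eq_mul, leadingCoeff]
    simp [mul_comm]

theorem sum_range_neg_one_pow_mul_choose_mul_ascPochhammer {R : Type*} [CommRing R] [IsDomain R]
    {a b n : ℕ} (h : a + b ≤ n) (c d : R) :
    ∑ j ∈ range (n + 1), (-1 : R) ^ (n - j) * n.choose j *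
        ((ascPochhammer R a).eval ((j : R) + c) * (ascPochhammer R b).eval (d - j)) =
      if a + b = n then (-1 : R) ^ b * n ! else 0 := by
  have hX : (C d - X : R[X]) = -(X - C d) := by ring
  have hleft : ((ascPochhammer R a).comp (X + C c)).natDegree = a ∧
      ((ascPochhammer R a).comp (X + C c)).leadingCoeff = 1 := by
    rw [natDegree_comp, leadingCoeff_comp (by rw [natDegree_X_add_C]; exact one_ne_zero),
      ascPochhammer_natDegree, (monic_ascPochhammer _ _).leadingCoeff, natDegree_X_add_C,
      leadingCoeff_X_add_C]
    simp
  have hright : ((ascPochhammer R b).comp (C d - X)).natDegree = b ∧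
      ((ascPochhammer R b).comp (C d - X)).leadingCoeff = (-1) ^ b := by
    rw [natDegree_comp,
      leadingCoeff_comp (by rw [hX, natDegree_neg, natDegree_X_sub_C]; exact one_ne_zero),
      ascPochhammer_natDegree, (monic_ascPochhammer _ _).leadingCoeff, hX, natDegree_neg,
      natDegree_X_sub_C, leadingCoeff_neg, leadingCoeff_X_sub_C]
    simp
  set P : R[X] := (ascPochhammer R a).comp (X + C c) * (ascPochhammer R b).comp (C d - X)
  have hlead : P.leadingCoeff = (-1) ^ b := by rw [leadingCoeff_mul, hleft.2, hright.2, one_mul]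
  have hP : P.natDegree = a + b := by
    rw [natDegree_mul' (by rw [hleft.2, hright.2, one_mul]; exact pow_ne_zero _ (by simp)),
      hleft.1, hright.1]
  have hcoeff : P.coeff n = if a + b = n then (-1) ^ b else 0 := by
    split_ifs with hn
    · rw [← hn, ← hP, coeff_natDegree, hlead]
    · exact coeff_eq_zero_of_natDegree_lt (by omega)
  have key := sum_range_neg_one_pow_mul_choose_mul_eval (hP ▸ h)
  rw [hcoeff] at key
  simp only [P, eval_mul, eval_comp, eval_add, eval_sub, eval_X, eval_C] at key
  rw [key, mul_ite, mul_zero, mul_comm]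

def jacobiCoeff (n j : ℕ) : ℝ := (-1) ^ (n - j) * n.choose j * (n + 2).choose (n - j)

theorem choose_mul_factorial_mul_factorial_eq_ascFactorial {i j k n : ℕ} (hj : j ≤ n) :
    (n + 2).choose (n - j) * (i + j + 2)! * (k + (n - j))! =
      (n + 2)! * ((j + 3).ascFactorial i * (n - j + 1).ascFactorial k) := by
  have h := choose_mul_factorial_mul_factorial (show n - j ≤ n + 2 by omega)
  rw [show n + 2 - (n - j) = j + 2 by omega] at h
  rw [← h, show i + j + 2 = j + 2 + i by ring, add_comm k, ← factorial_mul_ascFactorial (j + 2),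
    ← factorial_mul_ascFactorial (n - j)]
  ring

theorem sum_jacobiCoeff_mul_factorial {i k n : ℕ} (h : i + k ≤ n) :
    ∑ j ∈ range (n + 1), jacobiCoeff n j * ((i + j + 2)! * (k + (n - j))! : ℝ) =
      if i + k = n then (-1 : ℝ) ^ k * n ! * (n + 2)! else 0 := by
  have hterm : ∀ j ∈ range (n + 1), jacobiCoeff n j * ((i + j + 2)! * (k + (n - j))! : ℝ) =
      (n + 2)! * ((-1) ^ (n - j) * n.choose j *
        ((ascPochhammer ℝ i).eval ((j : ℝ) + 3) * (ascPochhammer ℝ k).eval ((n + 1 : ℝ) - j))) := by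
    intro j hj
    have hjn : j ≤ n := mem_range_succ_iff.1 hj
    have hcast := congrArg (Nat.cast : ℕ → ℝ)
      (choose_mul_factorial_mul_factorial_eq_ascFactorial (i := i) (k := k) hjn)
    push_cast at hcast
    rw [cast_ascFactorial, cast_ascFactorial] at hcast
    push_cast [Nat.cast_sub hjn] at hcast
    rw [jacobiCoeff, show (n : ℝ) + 1 - j = n - j + 1 by ring]
    linear_combination (-1 : ℝ) ^ (n - j) * n.choose j * hcast
  rw [sum_congr rfl hterm, ← mul_sum, sum_range_neg_one_pow_mul_choose_mul_ascPochhammer h]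
  split_ifs <;> ring

def jacobiGramSum (m n : ℕ) : ℝ :=
  ∑ i ∈ range (m + 1), ∑ j ∈ range (n + 1),
    jacobiCoeff m i * jacobiCoeff n j * ((i + j + 2)! * ((m - i) + (n - j))!)

theorem jacobiGramSum_comm (m n : ℕ) : jacobiGramSum m n = jacobiGramSum n m := by
  rw [jacobiGramSum, jacobiGramSum, sum_comm]
  refine sum_congr rfl fun j _ => sum_congr rfl fun i _ => ?_
  rw [add_comm i j, add_comm (m - i)]
  ring

theorem sum_range_choose_mul_choose_sub (n k : ℕ) :
    ∑ i ∈ range (n + 1), n.choose i * k.choose (n - i) = (n + k).choose n := by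
  rw [add_choose_eq, Nat.sum_antidiagonal_eq_sum_range_succ (fun i j => n.choose i * k.choose j)]

theorem jacobiGramSum_of_le {m n : ℕ} (h : m ≤ n) :
    jacobiGramSum m n = if m = n then ((2 * n + 2)! : ℝ) else 0 := by
  have hinner : ∀ i ∈ range (m + 1), ∑ j ∈ range (n + 1),
      jacobiCoeff m i * jacobiCoeff n j * ((i + j + 2)! * ((m - i) + (n - j))!) =
      jacobiCoeff m i * if m = n then (-1 : ℝ) ^ (m - i) * n ! * (n + 2)! else 0 := by
    intro i hi
    have him : i ≤ m := mem_range_succ_iff.1 hi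
    have hsum := sum_jacobiCoeff_mul_factorial (i := i) (k := m - i) (n := n) (by omega)
    rw [Nat.add_sub_cancel' him] at hsum
    rw [← hsum, mul_sum]
    exact sum_congr rfl fun j _ => by ring
  rw [jacobiGramSum, sum_congr rfl hinner]
  split_ifs with hmn
  · subst hmn
    have hsq : ∀ i ∈ range (m + 1), jacobiCoeff m i * ((-1) ^ (m - i) * m ! * (m + 2)!) =
        (m ! * (m + 2)! : ℝ) * (m.choose i * (m + 2).choose (m - i) : ℕ) := by
      intro i _
      rw [jacobiCoeff]
      push_cast
      linear_combination (m.choose i * (m + 2).choose (m - i) * m ! * (m + 2)! : ℝ) *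
        (by rw [← mul_pow]; simp : ((-1 : ℝ) ^ (m - i)) * (-1) ^ (m - i) = 1)
    rw [sum_congr rfl hsq, ← mul_sum, ← Nat.cast_sum, sum_range_choose_mul_choose_sub]
    have h := choose_mul_factorial_mul_factorial (show m ≤ m + (m + 2) by omega)
    rw [show m + (m + 2) - m = m + 2 by omega] at h
    rw [show 2 * m + 2 = m + (m + 2) by ring, ← h]
    push_cast
    ring
  · simp

theorem jacobiGramSum_eq (m n : ℕ) :
    jacobiGramSum m n = if m = n then ((2 * n + 2)! : ℝ) else 0 := by
  rcases le_total m n with h | h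
  · exact jacobiGramSum_of_le h
  · rw [jacobiGramSum_comm, jacobiGramSum_of_le h]
    by_cases hmn : m = n
    · subst hmn; rfl
    · rw [if_neg (Ne.symm hmn), if_neg hmn]

theorem integral_pow_mul_one_sub_pow (b c : ℕ) :
    ∫ t in (0 : ℝ)..1, t ^ b * (1 - t) ^ c = (b ! * c ! : ℝ) / (b + c + 1)! := by
  have hβ := Complex.betaIntegral_eval_nat_add_one_right (u := (b : ℂ) + 1)
    (by simp; positivity) c
  have hreal : Complex.betaIntegral ((b : ℂ) + 1) ((c : ℂ) + 1) =
      ((∫ t in (0 : ℝ)..1, t ^ b * (1 - t) ^ c : ℝ) : ℂ) := by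
    rw [Complex.betaIntegral, ← intervalIntegral.integral_ofReal]
    refine intervalIntegral.integral_congr fun t _ => ?_
    simp only [add_sub_cancel_right, Complex.cpow_natCast]
    push_cast; ring
  have hprod : ∏ j ∈ range (c + 1), ((b : ℂ) + 1 + j) = (b + c + 1)! / b ! := by
    rw [eq_div_iff (Nat.cast_ne_zero.2 (factorial_ne_zero _)), mul_comm]
    exact_mod_cast
      ascFactorial_eq_prod_range (b + 1) (c + 1) ▸ factorial_mul_ascFactorial b (c + 1)
  rw [hreal, hprod, div_div_eq_mul_div, mul_comm] at hβ
  rw [← Complex.ofReal_inj, hβ]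
  push_cast; rfl

theorem integral_pow_mul_sub_pow (s : ℝ) (b c : ℕ) :
    ∫ y in (0 : ℝ)..s, y ^ b * (s - y) ^ c =
      s ^ (b + c + 1) * ((b ! * c ! : ℝ) / (b + c + 1)!) := by
  rcases eq_or_ne s 0 with rfl | hs
  · simp
  have h := intervalIntegral.integral_comp_mul_left (fun y => y ^ b * (s - y) ^ c)
    (a := 0) (b := 1) hs
  simp only [mul_zero, mul_one, smul_eq_mul] at h
  rw [eq_inv_mul_iff_mul_eq₀ hs] at h
  rw [← h, ← integral_pow_mul_one_sub_pow, ← intervalIntegral.integral_const_mul,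
    ← intervalIntegral.integral_const_mul]
  refine intervalIntegral.integral_congr fun t _ => ?_
  rw [show s - s * t = s * (1 - t) by ring, mul_pow, mul_pow]
  ring

theorem isCompact_K2 : IsCompact K2 := by
  refine (isCompact_Icc (a := 0) (b := 1)).of_isClosed_subset ?_ fun p ⟨h0, h1, h01⟩ => ?_
  · show IsClosed ({p | 0 ≤ p 0} ∩ ({p | 0 ≤ p 1} ∩ {p : Fin 2 → ℝ | p 0 + p 1 ≤ 1}))
    exact (isClosed_le (by fun_prop) (by fun_prop)).inter
      ((isClosed_le (by fun_prop) (by fun_prop)).inter (isClosed_le (by fun_prop) (by fun_prop)))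
  · refine ⟨fun i => ?_, fun i => ?_⟩ <;> fin_cases i <;> simp <;> linarith

theorem measurableSet_K2 : MeasurableSet K2 := isCompact_K2.isClosed.measurableSet

def K2Prod : Set (ℝ × ℝ) := {z | 0 ≤ z.1 ∧ 0 ≤ z.2 ∧ z.1 + z.2 ≤ 1}

theorem integral_indicator_K2Prod_slice (g : ℝ × ℝ → ℝ) (x : ℝ) :
    ∫ y, K2Prod.indicator g (x, y) =
      (Set.Icc 0 1).indicator (fun x => ∫ y in (0 : ℝ)..(1 - x), g (x, y)) x := by
  by_cases hx : x ∈ Set.Icc (0 : ℝ) 1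
  · have hfib : (fun y => K2Prod.indicator g (x, y)) =
        (Set.Icc 0 (1 - x)).indicator (fun y => g (x, y)) := by
      ext y
      by_cases hy : y ∈ Set.Icc 0 (1 - x)
      · rw [Set.indicator_of_mem hy, Set.indicator_of_mem]
        exact ⟨hx.1, hy.1, by linarith [hy.2]⟩
      · rw [Set.indicator_of_notMem hy, Set.indicator_of_notMem]
        exact fun ⟨_, h0, h1⟩ => hy ⟨h0, by linarith⟩
    rw [Set.indicator_of_mem hx, hfib, integral_indicator measurableSet_Icc,
      integral_Icc_eq_integral_Ioc, ← intervalIntegral.integral_of_le (by linarith [hx.2])]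
  · rw [Set.indicator_of_notMem hx, ← integral_zero ℝ ℝ]
    congr 1 with y
    refine Set.indicator_of_notMem ?_ _
    rintro ⟨h0, h1, h2⟩
    exact hx ⟨h0, by linarith⟩

theorem integral_K2_eq_intervalIntegral {f : ℝ → ℝ → ℝ} (hf : Continuous (Function.uncurry f)) :
    ∫ p in K2, f (p 0) (p 1) = ∫ x in (0 : ℝ)..1, ∫ y in (0 : ℝ)..(1 - x), f x y := by
  have hK : K2 = (MeasurableEquiv.piFinTwo fun _ => ℝ) ⁻¹' K2Prod := rfl
  have he := volume_preserving_piFinTwo fun _ : Fin 2 => ℝ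
  have hmeas : MeasurableSet K2Prod :=
    (MeasurableEquiv.measurableSet_preimage _).1 (hK ▸ measurableSet_K2)
  have hint : IntegrableOn (Function.uncurry f) K2Prod := by
    rw [← he.integrableOn_comp_preimage (MeasurableEquiv.measurableEmbedding _), ← hK]
    exact (hf.comp (by fun_prop : Continuous fun p : Fin 2 → ℝ => (p 0, p 1))).continuousOn
      |>.integrableOn_compact isCompact_K2
  rw [hK]
  refine (he.setIntegral_preimage_emb (MeasurableEquiv.measurableEmbedding _)
    (Function.uncurry f) K2Prod).trans ?_
  rw [← integral_indicator hmeas, Measure.volume_eq_prod,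
    integral_prod _ (hint.integrable_indicator hmeas)]
  simp_rw [integral_indicator_K2Prod_slice]
  rw [integral_indicator measurableSet_Icc, integral_Icc_eq_integral_Ioc,
    intervalIntegral.integral_of_le zero_le_one]
  rfl

@[fun_prop]
theorem continuous_lam2 (i : Fin 3) : Continuous (lam2 i) := by
  fin_cases i <;> simp [lam2] <;> fun_prop

theorem integral_K2_prod_lam2_pow (α : Fin 3 → ℕ) :
    ∫ p in K2, ∏ i, lam2 i p ^ α i = (∏ i, ((α i)! : ℝ)) / ((∑ i, α i) + 2)! := by
  simp only [Fin.prod_univ_three, Fin.sum_univ_three]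
  have hinner : ∀ x : ℝ, ∫ y in (0 : ℝ)..(1 - x), (1 - x - y) ^ α 0 * x ^ α 1 * y ^ α 2 =
      x ^ α 1 * (1 - x) ^ (α 2 + α 0 + 1) * (((α 2)! * (α 0)! : ℝ) / (α 2 + α 0 + 1)!) := by
    intro x
    rw [mul_assoc, ← integral_pow_mul_sub_pow, ← intervalIntegral.integral_const_mul]
    exact intervalIntegral.integral_congr fun y _ => by ring
  calc ∫ p in K2, lam2 0 p ^ α 0 * lam2 1 p ^ α 1 * lam2 2 p ^ α 2
      = ∫ x in (0 : ℝ)..1, ∫ y in (0 : ℝ)..(1 - x), (1 - x - y) ^ α 0 * x ^ α 1 * y ^ α 2 :=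
        integral_K2_eq_intervalIntegral (f := fun x y => (1 - x - y) ^ α 0 * x ^ α 1 * y ^ α 2)
          (by fun_prop)
    _ = (∫ x in (0 : ℝ)..1, x ^ α 1 * (1 - x) ^ (α 2 + α 0 + 1)) *
          (((α 2)! * (α 0)! : ℝ) / (α 2 + α 0 + 1)!) := by
        simp_rw [hinner]; exact intervalIntegral.integral_mul_const _ _
    _ = _ := by
        rw [integral_pow_mul_one_sub_pow,
          show α 1 + (α 2 + α 0 + 1) + 1 = α 0 + α 1 + α 2 + 2 by ring]
        field_simp

theorem integral_K2_lam2_perm_pow (σ : Equiv.Perm (Fin 3)) (a b c : ℕ) :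
    ∫ p in K2, lam2 (σ 0) p ^ a * lam2 (σ 1) p ^ b * lam2 (σ 2) p ^ c =
      (a ! * b ! * c ! : ℝ) / (a + b + c + 2)! := by
  have hprod : ∀ p, ∏ i, lam2 i p ^ (![a, b, c] ∘ σ.symm) i =
      lam2 (σ 0) p ^ a * lam2 (σ 1) p ^ b * lam2 (σ 2) p ^ c := fun p => by
    rw [← Equiv.prod_comp σ]
    simp [Fin.prod_univ_three]
  have h := integral_K2_prod_lam2_pow (![a, b, c] ∘ σ.symm)
  simp only [hprod] at h
  rw [h, ← Equiv.prod_comp σ, ← Equiv.sum_comp σ]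
  simp [Fin.prod_univ_three, Fin.sum_univ_three]

theorem sum_lam2_perm (σ : Equiv.Perm (Fin 3)) (p : Fin 2 → ℝ) :
    lam2 (σ 0) p + lam2 (σ 1) p + lam2 (σ 2) p = 1 := by
  have h := Equiv.sum_comp σ (fun i => lam2 i p)
  simp only [Fin.sum_univ_three] at h
  rw [h]
  simp [lam2]; ring

def edgeProfile (i : ℕ) (u v : ℝ) : ℝ :=
  CEdgeTri i * u * v * jacobiHom i 0 2 (2 * v - (1 - u)) (1 - u)

theorem jacobiHom_zero_two_eq_sum {u v w : ℝ} (h : u + v + w = 1) (n : ℕ) :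
    jacobiHom n 0 2 (2 * v - (1 - u)) (1 - u) =
      ∑ j ∈ range (n + 1), jacobiCoeff n j * v ^ j * w ^ (n - j) := by
  rw [jacobiHom, ← sum_range_reflect]
  refine sum_congr rfl fun j hj => ?_
  have hjn : j ≤ n := mem_range_succ_iff.1 hj
  rw [show n + 1 - 1 - j = n - j by omega, Nat.sub_sub_self hjn, add_zero,
    show (2 * v - (1 - u) - (1 - u)) / 2 = -w by linarith,
    show (2 * v - (1 - u) + (1 - u)) / 2 = v by ring, neg_pow, jacobiCoeff]
  ring

theorem edgeProfile_mul_edgeProfile {u v w : ℝ} (h : u + v + w = 1) (m n : ℕ) :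
    edgeProfile m u v * edgeProfile n u v = CEdgeTri m * CEdgeTri n *
      ∑ i ∈ range (m + 1), ∑ j ∈ range (n + 1),
        jacobiCoeff m i * jacobiCoeff n j *
          (u ^ 2 * v ^ (i + j + 2) * w ^ ((m - i) + (n - j))) := by
  rw [edgeProfile, edgeProfile, jacobiHom_zero_two_eq_sum h, jacobiHom_zero_two_eq_sum h]
  calc _ = CEdgeTri m * CEdgeTri n * (u ^ 2 * v ^ 2) *
        ((∑ i ∈ range (m + 1), jacobiCoeff m i * v ^ i * w ^ (m - i)) *
          ∑ j ∈ range (n + 1), jacobiCoeff n j * v ^ j * w ^ (n - j)) := by ring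
    _ = _ := by
      rw [sum_mul_sum, mul_sum, mul_sum]
      refine sum_congr rfl fun i _ => ?_
      rw [mul_sum, mul_sum]
      refine sum_congr rfl fun j _ => ?_
      ring

theorem integral_edgeProfile_mul (σ : Equiv.Perm (Fin 3)) (m n : ℕ) :
    ∫ p in K2, edgeProfile m (lam2 (σ 0) p) (lam2 (σ 1) p) *
        edgeProfile n (lam2 (σ 0) p) (lam2 (σ 1) p) =
      CEdgeTri m * CEdgeTri n * 2 / (m + n + 6)! * jacobiGramSum m n := by
  set mono : ℕ → ℕ → (Fin 2 → ℝ) → ℝ := fun i j p =>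
    lam2 (σ 0) p ^ 2 * lam2 (σ 1) p ^ (i + j + 2) * lam2 (σ 2) p ^ ((m - i) + (n - j))
  have hint : ∀ i j, Integrable (mono i j) (volume.restrict K2) := fun i j =>
    (Continuous.continuousOn (by fun_prop)).integrableOn_compact isCompact_K2
  have hmono : ∀ i ∈ range (m + 1), ∀ j ∈ range (n + 1),
      ∫ p in K2, mono i j p = 2 * ((i + j + 2)! * ((m - i) + (n - j))!) / (m + n + 6)! := by
    intro i hi j hj
    have hi : i ≤ m := mem_range_succ_iff.1 hi
    have hj : j ≤ n := mem_range_succ_iff.1 hj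
    rw [integral_K2_lam2_perm_pow,
      show 2 + (i + j + 2) + ((m - i) + (n - j)) + 2 = m + n + 6 by omega,
      factorial_two]
    push_cast
    ring
  calc _ = ∫ p in K2, CEdgeTri m * CEdgeTri n * ∑ i ∈ range (m + 1), ∑ j ∈ range (n + 1),
        jacobiCoeff m i * jacobiCoeff n j * mono i j p := by
        congr 1 with p
        exact edgeProfile_mul_edgeProfile (sum_lam2_perm σ p) m n
    _ = CEdgeTri m * CEdgeTri n * ∑ i ∈ range (m + 1), ∑ j ∈ range (n + 1),
        jacobiCoeff m i * jacobiCoeff n j * ∫ p in K2, mono i j p := by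
        rw [integral_const_mul, integral_finsetSum _ fun i _ =>
          integrable_finsetSum _ fun j _ => (hint i j).const_mul _]
        congr 1
        refine sum_congr rfl fun i _ => ?_
        rw [integral_finsetSum _ fun j _ => (hint i j).const_mul _]
        exact sum_congr rfl fun j _ => integral_const_mul _ _
    _ = _ := by
        rw [jacobiGramSum, mul_sum, mul_sum]
        refine sum_congr rfl fun i hi => ?_
        rw [mul_sum, mul_sum]
        refine sum_congr rfl fun j hj => ?_
        rw [hmono i hi j hj]
        ring

theorem CEdgeTri_mul_self_mul (n : ℕ) :
    CEdgeTri n * CEdgeTri n * (2 * (2 * n + 2)!) = (2 * n + 6)! := by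
  rw [CEdgeTri, Real.mul_self_sqrt (Nat.cast_nonneg _),
    show 2 * n + 6 = 2 * n + 2 + 1 + 1 + 1 + 1 by ring]
  simp only [factorial_succ]
  push_cast
  ring

theorem integral_edgeProfile_mul_eq_ite (σ : Equiv.Perm (Fin 3)) (m n : ℕ) :
    ∫ p in K2, edgeProfile m (lam2 (σ 0) p) (lam2 (σ 1) p) *
        edgeProfile n (lam2 (σ 0) p) (lam2 (σ 1) p) = if m = n then 1 else 0 := by
  rw [integral_edgeProfile_mul, jacobiGramSum_eq]
  split_ifs with h
  · subst h
    rw [show m + m + 6 = 2 * m + 6 by ring, div_mul_eq_mul_div, div_eq_one_iff_eq (by positivity),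
      ← CEdgeTri_mul_self_mul]
    ring
  · rw [mul_zero]

theorem exists_perm_fin_three {k1 k2 : Fin 3} (h : k1 ≠ k2) :
    ∃ σ : Equiv.Perm (Fin 3), σ 0 = k1 ∧ σ 1 = k2 := by
  revert k1 k2
  decide

theorem vtx2_sub_ne_zero {k1 k2 : Fin 3} (h : k1 ≠ k2) : vtx2 k2 - vtx2 k1 ≠ 0 := by
  intro h0
  have h0 := congrFun h0
  fin_cases k1 <;> fin_cases k2 <;> simp_all [vtx2]

theorem dot2_smul_inv_norm2_smul {t : Fin 2 → ℝ} (ht : t ≠ 0) (a b : ℝ) :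
    dot2 (a • (norm2 t)⁻¹ • t) (b • (norm2 t)⁻¹ • t) = a * b := by
  have hpos : 0 < t 0 ^ 2 + t 1 ^ 2 := by
    by_contra hle
    exact ht (funext fun i => by
      fin_cases i <;> simp <;> nlinarith [sq_nonneg (t 0), sq_nonneg (t 1)])
  have hnorm : norm2 t ^ 2 = t 0 ^ 2 + t 1 ^ 2 := by
    rw [norm2, Fin.sum_univ_two, Real.sq_sqrt hpos.le]
  have hne : norm2 t ≠ 0 := fun h0 => by rw [h0] at hnorm; linarith
  simp only [dot2, Fin.sum_univ_two, Pi.smul_apply, smul_eq_mul]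
  field_simp
  linear_combination a * b * hnorm.symm

/-- for each edge `e_k = [k1,k2]` of the reference triangle the
edge-based interior functions are orthonormal on `K²`. -/
theorem stmt4 : ∀ (k1 k2 : Fin 3), k1 < k2 → ∀ m n : ℕ,
    ∫ p in K2, dot2 (PhiEdgeTri k1 k2 m p) (PhiEdgeTri k1 k2 n p) =
      (if m = n then (1:ℝ) else 0) := by
  intro k1 k2 hlt m n
  obtain ⟨σ, rfl, rfl⟩ := exists_perm_fin_three hlt.ne
  simp only [PhiEdgeTri, dot2_smul_inv_norm2_smul (vtx2_sub_ne_zero hlt.ne)]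
  exact integral_edgeProfile_mul_eq_ite σ m n
end
end

section
/- On the reference triangle K², for each edge e_k = [k1,k2] and each integer i ≥ 0, the edge-based interior function Φ^{t,i}_{e[k1,k2]} = C_i λ_{k1} λ_{k2} (1−λ_{k1})^i P_i^{(0,2)}(2λ_{k2}/(1−λ_{k1}) − 1) τ^{e_k}/|τ^{e_k}| (with C_i = √(2(i+2)(i+3)(2i+3)(2i+5))) satisfies: (i) its normal component vanishes at every point of each of the three edges of K², i.e. n^{e_j} · Φ^{t,i}_{e[k1,k2]} = 0 on e_j for every edge e_j; and (ii) its tangential component vanishes on the other two edges, i.e. τ^{e_j} · Φ^{t,i}_{e[k1,k2]} = 0 at every point of e_j whenever e_j ≠ e_k. -/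
/-!
`Φ^{t,i}_{e[k1,k2]}` is a scalar multiple of the tangent `τ^{e_k}` carrying the factor
`λ_{k1} λ_{k2}`. Each edge other than `e_k` misses one of `k1`, `k2`, so the barycentric
coordinate of that vertex, an affine function vanishing at both endpoints of the edge,
vanishes along it and `Φ` is zero there. On `e_k` itself the normal component vanishes
because `τ^{e_k}` is orthogonal to the normal of `e_k`.
-/

open MeasureTheory
open scoped BigOperators

noncomputable section

/-- The unit outward normal of `K²` on the edge opposite the vertex `c`
(that edge lies on the line `λ_c = 0`): `n = −∇λ_c / |∇λ_c|`. -/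
def nEdge2 (c : Fin 3) : Fin 2 → ℝ := (norm2 (gradLam2 c))⁻¹ • (-(gradLam2 c))

lemma dot2_smul_right (u v : Fin 2 → ℝ) (a : ℝ) : dot2 u (a • v) = a * dot2 u v := by
  simp only [dot2, Pi.smul_apply, smul_eq_mul, Finset.mul_sum]
  exact Finset.sum_congr rfl fun _ _ => by ring

lemma lam2_vtx2 (c j : Fin 3) : lam2 c (vtx2 j) = if c = j then 1 else 0 := by
  fin_cases c <;> fin_cases j <;> norm_num [lam2, vtx2]

lemma lam2_add_smul {a b : ℝ} (hab : a + b = 1) (c : Fin 3) (x y : Fin 2 → ℝ) :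
    lam2 c (a • x + b • y) = a * lam2 c x + b * lam2 c y := by
  fin_cases c
  · simp only [lam2, Fin.zero_eta, Matrix.cons_val_zero, Pi.add_apply, Pi.smul_apply, smul_eq_mul]
    linear_combination -hab
  all_goals simp [lam2]

lemma lam2_eq_zero_of_mem_segment {c j1 j2 : Fin 3} (h1 : c ≠ j1) (h2 : c ≠ j2)
    {p : Fin 2 → ℝ} (hp : p ∈ segment ℝ (vtx2 j1) (vtx2 j2)) : lam2 c p = 0 := by
  obtain ⟨a, b, -, -, hab, rfl⟩ := hp
  simp [lam2_add_smul hab, lam2_vtx2, h1, h2]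

lemma dot2_nEdge2_tangent {c k1 k2 : Fin 3} (h1 : c ≠ k1) (h2 : c ≠ k2) :
    dot2 (nEdge2 c) (vtx2 k2 - vtx2 k1) = 0 := by
  fin_cases c <;> fin_cases k1 <;> fin_cases k2 <;>
    simp_all [dot2, nEdge2, gradLam2, vtx2, Fin.sum_univ_two]

lemma PhiEdgeTri_eq_smul_tangent (k1 k2 : Fin 3) (i : ℕ) (p : Fin 2 → ℝ) :
    ∃ a : ℝ, PhiEdgeTri k1 k2 i p = a • (vtx2 k2 - vtx2 k1) :=
  ⟨_, (smul_smul _ _ _).trans rfl⟩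

lemma PhiEdgeTri_eq_zero_of_lam2_eq_zero {k1 k2 : Fin 3} (i : ℕ) {p : Fin 2 → ℝ}
    (h : lam2 k1 p = 0 ∨ lam2 k2 p = 0) : PhiEdgeTri k1 k2 i p = 0 := by
  rcases h with h | h <;> simp [PhiEdgeTri, h]

lemma exists_vertex_not_mem_edge {k1 k2 j1 j2 : Fin 3} (hk : k1 < k2) (hj : j1 < j2)
    (hne : (j1, j2) ≠ (k1, k2)) : (k1 ≠ j1 ∧ k1 ≠ j2) ∨ (k2 ≠ j1 ∧ k2 ≠ j2) := by
  revert k1 k2 j1 j2; decide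

lemma PhiEdgeTri_eq_zero_of_mem_other_edge {k1 k2 j1 j2 : Fin 3} (hk : k1 < k2)
    (hj : j1 < j2) (hne : (j1, j2) ≠ (k1, k2)) (i : ℕ) {p : Fin 2 → ℝ}
    (hp : p ∈ segment ℝ (vtx2 j1) (vtx2 j2)) : PhiEdgeTri k1 k2 i p = 0 := by
  apply PhiEdgeTri_eq_zero_of_lam2_eq_zero
  rcases exists_vertex_not_mem_edge hk hj hne with ⟨h1, h2⟩ | ⟨h1, h2⟩
  · exact .inl (lam2_eq_zero_of_mem_segment h1 h2 hp)
  · exact .inr (lam2_eq_zero_of_mem_segment h1 h2 hp)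

/-- each edge-based interior function of the triangular element
(i) has vanishing normal component at every point of each of the three edges of
`K²`, and (ii) has vanishing tangential component at every point of each edge
other than its associated edge `e_k = [k1,k2]`. -/
theorem stmt6 : ∀ (k1 k2 : Fin 3), k1 < k2 → ∀ i : ℕ,
    (∀ (j1 j2 c : Fin 3), j1 < j2 → c ≠ j1 → c ≠ j2 →
      ∀ p ∈ segment ℝ (vtx2 j1) (vtx2 j2),
        dot2 (nEdge2 c) (PhiEdgeTri k1 k2 i p) = 0) ∧
    (∀ (j1 j2 : Fin 3), j1 < j2 → (j1, j2) ≠ (k1, k2) →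
      ∀ p ∈ segment ℝ (vtx2 j1) (vtx2 j2),
        dot2 (vtx2 j2 - vtx2 j1) (PhiEdgeTri k1 k2 i p) = 0) := by
  intro k1 k2 hk i
  refine ⟨fun j1 j2 c hj hc1 hc2 p hp => ?_, fun j1 j2 hj hne p hp => ?_⟩
  · by_cases hedge : (j1, j2) = (k1, k2)
    · obtain ⟨rfl, rfl⟩ := Prod.mk.inj hedge
      obtain ⟨a, hΦ⟩ := PhiEdgeTri_eq_smul_tangent j1 j2 i p
      rw [hΦ, dot2_smul_right, dot2_nEdge2_tangent hc1 hc2, mul_zero]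
    · simp [PhiEdgeTri_eq_zero_of_mem_other_edge hk hj hedge i hp, dot2]
  · simp [PhiEdgeTri_eq_zero_of_mem_other_edge hk hj hne i hp, dot2]
end
end
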